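/- A tree T rooted at s on the reachable vertices of a flow graph G is equal to the dominator tree of G if and only if T has both the parent property and the sibling property. -/

import Mathlib

/-!
Under the parent property every tree ancestor of a vertex dominates it, and the sibling property
then forces every dominator to be a tree ancestor, so `t x` is the immediate dominator of `x`.
Conversely, in the dominator tree the dominators of a vertex are its ancestors (by induction on
depth), which yields both properties.
-/
variable {V : Type*}

/-- `p` is a path (walk) in the digraph `E` from `a` to `b`, given as its list of vertices. -/
def IsPath (E : V → V → Prop) (a b : V) (p : List V) : Prop :=
  p.Chain' E ∧ p.head? = some a ∧ p.getLast? = some b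

/-- `v` is reachable from `s` in the digraph `E`. -/
def Reach (E : V → V → Prop) (s v : V) : Prop := ∃ p, IsPath E s v p

/-- `w` dominates `v` in the flow graph `(E, s)`. -/
def Dom (E : V → V → Prop) (s w v : V) : Prop :=
  Reach E s v ∧ ∀ p, IsPath E s v p → w ∈ p

/-- `dv` is the immediate dominator of `v`: `dv ≠ v`, `dv` dominates `v`, and every
proper dominator of `v` dominates `dv`. -/
def IsIdom (E : V → V → Prop) (s dv v : V) : Prop :=
  dv ≠ v ∧ Dom E s dv v ∧ ∀ u, Dom E s u v → u ≠ v → Dom E s u dv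

/-- `u` is an ancestor of `w` in the tree given by parent function `parent` (reflexive). -/
def Anc (parent : V → V) (u w : V) : Prop := ∃ k, parent^[k] w = u

/-- The tree with parent function `t` has the parent property for flow graph `(E, s)`. -/
def ParentProp (E : V → V → Prop) (s : V) (t : V → V) : Prop :=
  ∀ v w, E v w → Reach E s v → Anc t (t w) v

/-- The tree with parent function `t` has the sibling property for flow graph `(E, s)`. -/
def SiblingProp (E : V → V → Prop) (s : V) (t : V → V) : Prop :=
  ∀ v w, Reach E s v → Reach E s w → v ≠ s → w ≠ s → t v = t w → v ≠ w → ¬ Dom E s v w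

/-- `t` is (the parent function of) a tree rooted at `s` on the reachable vertices. -/
def IsRootedTree (E : V → V → Prop) (s : V) (t : V → V) : Prop :=
  t s = s ∧ ∀ v, Reach E s v → (v ≠ s → Reach E s (t v)) ∧ ∃ k, t^[k] v = s

namespace List

variable {α : Type*}

theorem exists_split_at_first {P : α → Prop} {l : List α} (h : ∃ x ∈ l, P x) :
    ∃ a x b, l = a ++ x :: b ∧ P x ∧ ∀ y ∈ a, ¬P y := by
  classical
  obtain ⟨x, hx⟩ := Option.isSome_iff_exists.mp
    (find?_isSome (p := fun y => decide (P y)) (xs := l) |>.mpr (by simpa using h))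
  obtain ⟨hPx, a, b, rfl, ha⟩ := find?_eq_some_iff_append.mp hx
  exact ⟨a, x, b, rfl, by simpa using hPx, fun y hy => by simpa using ha y hy⟩

theorem exists_split_at_last {P : α → Prop} {l : List α} (h : ∃ x ∈ l, P x) :
    ∃ a x b, l = a ++ x :: b ∧ P x ∧ ∀ y ∈ b, ¬P y := by
  obtain ⟨a, x, b, hl, hx, ha⟩ := exists_split_at_first (l := l.reverse) (by simpa using h)
  refine ⟨b.reverse, x, a.reverse, ?_, hx, fun y hy => ha y (mem_reverse.mp hy)⟩
  simpa using congrArg reverse hl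

end List

section Paths

variable {E : V → V → Prop} {a b v w x : V} {p q l r : List V}

theorem isPath_singleton (E : V → V → Prop) (a : V) : IsPath E a a [a] :=
  ⟨List.isChain_singleton a, rfl, rfl⟩

theorem isPath_pair (h : E a b) : IsPath E a b [a, b] :=
  ⟨List.isChain_pair.mpr h, rfl, rfl⟩

theorem IsPath.head_mem (hp : IsPath E a b p) : a ∈ p :=
  List.mem_of_mem_head? hp.2.1

theorem IsPath.getLast_mem (hp : IsPath E a b p) : b ∈ p :=
  List.mem_of_mem_getLast? hp.2.2

theorem IsPath.append (hq : IsPath E a x q) (hr : IsPath E x b (x :: r)) :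
    IsPath E a b (q ++ r) := by
  obtain ⟨hqc, hqa, hqx⟩ := hq
  obtain ⟨hrc, -, hrb⟩ := hr
  refine ⟨List.isChain_append.mpr ⟨hqc, hrc.tail, ?_⟩, ?_, ?_⟩
  · intro y hy z hz
    rw [hqx, Option.mem_some_iff] at hy
    exact hy ▸ List.isChain_cons.mp hrc |>.1 z hz
  · simp [List.head?_append, hqa]
  · cases r with
    | nil => simpa [hqx] using hrb
    | cons y r => simpa [List.getLast?_append] using hrb

theorem IsPath.prefix (hp : IsPath E a b (l ++ x :: r)) : IsPath E a x (l ++ [x]) := by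
  obtain ⟨hc, ha, -⟩ := hp
  refine ⟨hc.prefix ⟨r, by simp⟩, ?_, by simp⟩
  cases l <;> simpa using ha

theorem IsPath.suffix (hp : IsPath E a b (l ++ x :: r)) : IsPath E x b (x :: r) := by
  obtain ⟨hc, -, hb⟩ := hp
  refine ⟨hc.suffix ⟨l, rfl⟩, rfl, ?_⟩
  cases r <;> simp_all [List.getLast?_append]

theorem reach_self (E : V → V → Prop) (a : V) : Reach E a a :=
  ⟨[a], isPath_singleton E a⟩

theorem Reach.tail (hv : Reach E a v) (h : E v w) : Reach E a w :=
  let ⟨p, hp⟩ := hv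
  ⟨p ++ [w], hp.append (isPath_pair h)⟩

theorem IsPath.reach_of_mem (hp : IsPath E a b p) (hx : x ∈ p) : Reach E a x := by
  obtain ⟨l, r, rfl⟩ := List.append_of_mem hx
  exact ⟨_, hp.prefix⟩

end Paths

section Dominators

variable {E : V → V → Prop} {s u v w x y : V} {l r : List V}

theorem dom_start (hv : Reach E s v) : Dom E s s v :=
  ⟨hv, fun _ hp => hp.head_mem⟩

theorem Dom.eq_start (h : Dom E s u s) : u = s := by
  simpa using h.2 [s] (isPath_singleton E s)

theorem Dom.reach_left (h : Dom E s u v) : Reach E s u :=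
  let ⟨p, hp⟩ := h.1
  hp.reach_of_mem (h.2 p hp)

theorem Dom.trans (huv : Dom E s u v) (hvw : Dom E s v w) : Dom E s u w := by
  refine ⟨hvw.1, fun p hp => ?_⟩
  obtain ⟨l, r, rfl⟩ := List.append_of_mem (hvw.2 p hp)
  have hu := huv.2 _ hp.prefix
  simp only [List.mem_append, List.mem_cons] at hu ⊢
  tauto

theorem Dom.of_isPath_append_cons (hy : Dom E s y v) (hp : IsPath E s v (l ++ x :: r))
    (hr : y ∉ r) : Dom E s y x :=
  ⟨⟨_, hp.prefix⟩, fun q hq => by simpa [hr] using hy.2 _ (hq.append hp.suffix)⟩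

theorem Dom.of_edge (hw : Dom E s u w) (huw : u ≠ w) (h : E v w) (hv : Reach E s v) :
    Dom E s u v :=
  ⟨hv, fun q hq => by simpa [huw] using hw.2 _ (hq.append (isPath_pair h))⟩

theorem Dom.antisymm (huv : Dom E s u v) (hvu : Dom E s v u) : u = v := by
  -- the first of `u`, `v` on a path to `v` is reached avoiding the other one
  obtain ⟨p, hp⟩ := huv.1
  obtain ⟨l, x, r, rfl, hx, hl⟩ :=
    List.exists_split_at_first (P := (· ∈ [u, v])) ⟨v, hp.getLast_mem, by simp⟩
  simp only [List.mem_cons, List.not_mem_nil, or_false] at hx hl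
  rcases hx with rfl | rfl
  · rcases List.mem_append.mp (hvu.2 _ hp.prefix) with h | h
    · exact absurd (.inr rfl) (hl v h)
    · exact (List.mem_singleton.mp h).symm
  · rcases List.mem_append.mp (huv.2 _ hp.prefix) with h | h
    · exact absurd (.inl rfl) (hl u h)
    · exact List.mem_singleton.mp h

theorem Dom.total {u₁ u₂ : V} (h₁ : Dom E s u₁ v) (h₂ : Dom E s u₂ v) :
    Dom E s u₁ u₂ ∨ Dom E s u₂ u₁ := by
  -- the last of `u₁`, `u₂` on a path to `v` is dominated by the other one
  obtain ⟨p, hp⟩ := h₁.1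
  obtain ⟨l, x, r, rfl, hx, hr⟩ :=
    List.exists_split_at_last (P := (· ∈ [u₁, u₂])) ⟨u₁, h₁.2 p hp, by simp⟩
  simp only [List.mem_cons, List.not_mem_nil, or_false] at hx hr
  rcases hx with rfl | rfl
  · exact .inr (h₂.of_isPath_append_cons hp fun h => hr _ h (.inr rfl))
  · exact .inl (h₁.of_isPath_append_cons hp fun h => hr _ h (.inl rfl))

theorem dom_of_propagates {Q : V → Prop} (hs : Q s)
    (hQ : ∀ v w, E v w → Reach E s v → w ≠ y → Q v → Q w) (hx : Reach E s x)
    (hQx : ¬Q x) : Dom E s y x := by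
  refine ⟨hx, fun p hp => by_contra fun hy => hQx ?_⟩
  have hchain : p.IsChain (fun v w => E v w ∧ w ≠ y) :=
    hp.1.imp_of_mem_imp fun _ w _ hw h => ⟨h, fun hwy => hy (hwy ▸ hw)⟩
  refine (hchain.induction (fun v => Reach E s v ∧ Q v) p ?_ ?_ x hp.getLast_mem).2
  · rintro v w ⟨h, hwy⟩ ⟨hv, hQv⟩
    exact ⟨hv.tail h, hQ v w h hv hwy hQv⟩
  · intro hp0
    rw [(List.head_eq_iff_head?_eq_some hp0).mpr hp.2.1]
    exact ⟨reach_self E s, hs⟩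

end Dominators

section Trees

variable {E : V → V → Prop} {s x y z : V} {t : V → V}

theorem Anc.refl (t : V → V) (x : V) : Anc t x x := ⟨0, rfl⟩

theorem anc_apply (t : V → V) (x : V) : Anc t (t x) x := ⟨1, rfl⟩

theorem Anc.trans (hyx : Anc t y x) (hzy : Anc t z y) : Anc t z x :=
  let ⟨a, ha⟩ := hyx
  let ⟨b, hb⟩ := hzy
  ⟨b + a, by rw [Function.iterate_add_apply, ha, hb]⟩

theorem Anc.anc_apply_of_ne (h : Anc t y x) (hyx : y ≠ x) : Anc t y (t x) := by
  obtain ⟨_ | k, rfl⟩ := h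
  · exact absurd rfl hyx
  · exact ⟨k, rfl⟩

theorem Anc.eq_of_apply_eq (h : Anc t y x) (hx : t x = x) : y = x := by
  obtain ⟨k, rfl⟩ := h
  exact Function.iterate_fixed hx k

theorem Anc.exists_boundary {P : V → Prop} (h : Anc t y x) (hx : ¬P x) (hy : P y) :
    ∃ z, Anc t z x ∧ ¬P z ∧ P (t z) := by
  obtain ⟨n, rfl⟩ := h
  by_contra! hcon
  suffices ∀ k, ¬P (t^[k] x) from this n hy
  intro k
  induction k with
  | zero => exact hx
  | succ k ih =>
    rw [Function.iterate_succ_apply']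
    exact hcon _ ⟨k, rfl⟩ ih

namespace IsRootedTree

theorem anc_start (ht : IsRootedTree E s t) (hx : Reach E s x) : Anc t s x := (ht.2 x hx).2

theorem apply_ne (ht : IsRootedTree E s t) (hx : Reach E s x) (hxs : x ≠ s) : t x ≠ x :=
  fun h => hxs ((ht.anc_start hx).eq_of_apply_eq h).symm

theorem reach_of_anc (ht : IsRootedTree E s t) (hx : Reach E s x) (h : Anc t y x) :
    Reach E s y := by
  obtain ⟨k, rfl⟩ := h
  induction k with
  | zero => exact hx
  | succ k ih =>
    rw [Function.iterate_succ_apply']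
    rcases eq_or_ne (t^[k] x) s with h | h
    · rw [h, ht.1]
      exact reach_self E s
    · exact (ht.2 _ ih).1 h

end IsRootedTree

end Trees

section DominatorTree

variable {E : V → V → Prop} {s u x y : V} {t : V → V}

/-- Under the parent property, "not a descendant of `y`" propagates along every edge that does not
enter `y`. -/
theorem dom_of_anc (hts : t s = s) (hpp : ParentProp E s t) (hx : Reach E s x)
    (h : Anc t y x) : Dom E s y x := by
  rcases eq_or_ne y s with rfl | hys
  · exact dom_start hx
  refine dom_of_propagates (Q := fun z => ¬Anc t y z)
    (fun hs => hys (hs.eq_of_apply_eq hts)) ?_ hx (not_not.mpr h)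
  intro v w hvw hv hwy hyv hyw
  exact hyv ((hpp v w hvw hv).trans (hyw.anc_apply_of_ne hwy.symm))

/-- If `u` dominates `x` without being its ancestor, let `u'` and `x'` be the children of the
nearest common ancestor of `u` and `x` on the way to `u` and to `x`. Both dominate `x`, so one of
these siblings dominates the other. -/
theorem anc_of_dom (ht : IsRootedTree E s t) (hpp : ParentProp E s t)
    (hsp : SiblingProp E s t) (hux : Dom E s u x) : Anc t u x := by
  by_contra hnanc
  have hu := hux.reach_left
  have hx := hux.1
  obtain ⟨u', hu'u, hu'x, hzx⟩ :=
    (ht.anc_start hu).exists_boundary (P := (Anc t · x)) hnanc (ht.anc_start hx)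
  have hxz : x ≠ t u' := by
    intro hxz
    have hxu : Anc t x u := hu'u.trans (hxz ▸ anc_apply t u')
    exact hnanc (hux.antisymm (dom_of_anc ht.1 hpp hu hxu) ▸ Anc.refl t x)
  obtain ⟨x', hx'x, hx'z, htx'⟩ := hzx.exists_boundary (P := (· = t u')) hxz rfl
  have hsib : t u' = t x' := htx'.symm
  have hne : u' ≠ x' := fun h => hu'x (h ▸ hx'x)
  have hu's : u' ≠ s := fun h => hu'x (h ▸ ht.anc_start hx)
  have hx's : x' ≠ s := fun h => hx'z (by rw [← htx', h, ht.1])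
  have hu'r := ht.reach_of_anc hu hu'u
  have hx'r := ht.reach_of_anc hx hx'x
  rcases ((dom_of_anc ht.1 hpp hu hu'u).trans hux).total (dom_of_anc ht.1 hpp hx hx'x) with h | h
  · exact hsp u' x' hu'r hx'r hu's hx's hsib hne h
  · exact hsp x' u' hx'r hu'r hx's hu's hsib.symm hne.symm h

theorem isIdom_of_parentProp_of_siblingProp (ht : IsRootedTree E s t) (hpp : ParentProp E s t)
    (hsp : SiblingProp E s t) (hx : Reach E s x) (hxs : x ≠ s) : IsIdom E s (t x) x :=
  ⟨ht.apply_ne hx hxs, dom_of_anc ht.1 hpp hx (anc_apply t x), fun _ hux hne =>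
    dom_of_anc ht.1 hpp ((ht.2 x hx).1 hxs) ((anc_of_dom ht hpp hsp hux).anc_apply_of_ne hne)⟩

theorem anc_of_dom_of_isIdom (ht : IsRootedTree E s t)
    (hidom : ∀ v, Reach E s v → v ≠ s → IsIdom E s (t v) v) (hux : Dom E s u x) :
    Anc t u x := by
  obtain ⟨k, hk⟩ := (ht.2 x hux.1).2
  induction k generalizing x with
  | zero =>
    obtain rfl : x = s := hk
    rw [hux.eq_start]
    exact Anc.refl t _
  | succ k ih =>
    rcases eq_or_ne u x with rfl | hne
    · exact Anc.refl t u
    have hxs : x ≠ s := by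
      rintro rfl
      exact hne hux.eq_start
    exact (anc_apply t x).trans (ih ((hidom x hux.1 hxs).2.2 u hux hne) hk)

theorem parentProp_of_isIdom (ht : IsRootedTree E s t)
    (hidom : ∀ v, Reach E s v → v ≠ s → IsIdom E s (t v) v) : ParentProp E s t := by
  intro v w hvw hv
  rcases eq_or_ne w s with rfl | hws
  · rw [ht.1]
    exact ht.anc_start hv
  · obtain ⟨hne, hdom, -⟩ := hidom w (hv.tail hvw) hws
    exact anc_of_dom_of_isIdom ht hidom (hdom.of_edge hne hvw hv)

/-- A dominating sibling `v` of `w` would be a proper ancestor of `w`, hence of its own parent. -/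
theorem siblingProp_of_isIdom (ht : IsRootedTree E s t)
    (hidom : ∀ v, Reach E s v → v ≠ s → IsIdom E s (t v) v) : SiblingProp E s t := by
  intro v w hv _ hvs _ hvw hne hdom
  have hanc : Anc t v (t v) := hvw ▸ (anc_of_dom_of_isIdom ht hidom hdom).anc_apply_of_ne hne
  obtain ⟨hparent, hdom', -⟩ := hidom v hv hvs
  exact hparent (hdom'.antisymm
    (dom_of_anc ht.1 (parentProp_of_isIdom ht hidom) hdom'.reach_left hanc))

end DominatorTree

/-- A tree `t` rooted at `s` on the reachable vertices is the dominator tree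
(i.e. the parent of every reachable `v ≠ s` is its immediate dominator) if and only if
it has both the parent property and the sibling property. -/
theorem dominator_tree_iff_parent_sibling (E : V → V → Prop) (s : V) (t : V → V)
    (ht : IsRootedTree E s t) :
    (∀ v, Reach E s v → v ≠ s → IsIdom E s (t v) v) ↔
      (ParentProp E s t ∧ SiblingProp E s t) :=
  ⟨fun hidom => ⟨parentProp_of_isIdom ht hidom, siblingProp_of_isIdom ht hidom⟩,
    fun ⟨hpp, hsp⟩ _ hv hvs => isIdom_of_parentProp_of_siblingProp ht hpp hsp hv hvs⟩
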